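/- For all real b, c > -1, the partial products ∏_{n=1}^{N} [((n+b)(n+(b+1)/2)(n+c/2)) / ((n+c)(n+(c+1)/2)(n+b/2))]^{u_n} converge as N → ∞ to (c+1)/(b+1). -/

import Mathlib

open Filter Finset Topology

/-- The Thue–Morse sequence with values `±1`: `u n = (-1)^(s₂ n)` where `s₂ n`
is the sum of the binary digits of `n`. -/
def u (n : ℕ) : ℤ := (-1) ^ (Nat.digits 2 n).sum

/-!
Write `g n x = log (n + x) + log (2n + x + 1) - log (2n + x)`, so that the `n`-th factor is
`exp (g n b - g n c)` and `g 0 x = log (1 + x)`. With `Ψ_N x = ∑_{n < N} u_n g n x` the partial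
product is `exp (Ψ_{N+1} b - Ψ_{N+1} c) · (c + 1) / (b + 1)`, so it suffices that
`Ψ_N b - Ψ_N c → 0`.

Since `u_{2n} = u_n`, `u_{2n+1} = -u_n` and `g (2n) x - g (2n+1) x = g n (x/2) - g n ((x+1)/2)`,
we have `Ψ_{2N} x = Ψ_N (x/2) - Ψ_N ((x+1)/2)`; differentiating, `Ψ'` and `Ψ''` satisfy the same
recursion with factors `1/2` and `1/4`. On `[δ - 1, ∞)`, which the maps `x ↦ x/2` and
`x ↦ (x+1)/2` preserve when `δ ≤ 1`, the factor `1/4` halves the bound on `Ψ''` at each doubling, so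
`Ψ''_N = O(1/N)`. For `Ψ'` the recursion is a difference at distance `1/2`, so the mean value
theorem gives `Ψ'_N = O(1/N)`, and then `Ψ_N b - Ψ_N c = O(|b - c| / N)`. Odd indices differ from
even ones by a single term of the same order.
-/

open Real

lemma u_zero : u 0 = 1 := rfl

lemma u_two_mul (n : ℕ) : u (2 * n) = u n := by
  rcases n.eq_zero_or_pos with rfl | hn
  · rfl
  · rw [u, Nat.digits_def' one_lt_two (by omega), Nat.mul_mod_right,
      Nat.mul_div_cancel_left n two_pos]
    simp [u]

lemma u_two_mul_add_one (n : ℕ) : u (2 * n + 1) = -u n := by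
  rw [u, Nat.digits_def' one_lt_two (by omega), Nat.mul_add_mod, show (2 * n + 1) / 2 = n by omega]
  simp [u, pow_add]

lemma abs_u (n : ℕ) : |(u n : ℝ)| = 1 := by
  simp [u]

lemma sum_range_two_mul_u_mul {R : Type*} [CommRing R] (f : ℕ → R) (N : ℕ) :
    ∑ n ∈ range (2 * N), (u n : R) * f n =
      ∑ n ∈ range N, (u n : R) * (f (2 * n) - f (2 * n + 1)) := by
  induction N with
  | zero => simp
  | succ N ih =>
    rw [show 2 * (N + 1) = 2 * N + 1 + 1 by ring, sum_range_succ, sum_range_succ, ih,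
      sum_range_succ, u_two_mul, u_two_mul_add_one]
    push_cast
    ring

def tmSum (k : ℕ → ℝ → ℝ) (N : ℕ) (x : ℝ) : ℝ :=
  ∑ n ∈ range N, (u n : ℝ) * k n x

section TmSum

variable {k k' : ℕ → ℝ → ℝ}

lemma tmSum_succ (N : ℕ) (x : ℝ) : tmSum k (N + 1) x = tmSum k N x + u N * k N x :=
  sum_range_succ _ _

lemma tmSum_one (x : ℝ) : tmSum k 1 x = k 0 x := by
  simp [tmSum, u_zero]

lemma abs_tmSum_le_succ (N : ℕ) (x : ℝ) :
    |tmSum k N x| ≤ |tmSum k (N + 1) x| + |k N x| := by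
  calc |tmSum k N x| = |tmSum k (N + 1) x - u N * k N x| := by
        rw [tmSum_succ, add_sub_cancel_right]
    _ ≤ |tmSum k (N + 1) x| + |u N * k N x| := abs_sub _ _
    _ = |tmSum k (N + 1) x| + |k N x| := by rw [abs_mul, abs_u, one_mul]

lemma tmSum_two_mul {c x : ℝ}
    (hk : ∀ n, k (2 * n) x - k (2 * n + 1) x = c * (k n (x / 2) - k n ((x + 1) / 2))) (N : ℕ) :
    tmSum k (2 * N) x = c * (tmSum k N (x / 2) - tmSum k N ((x + 1) / 2)) := by
  simp only [tmSum, sum_range_two_mul_u_mul, hk, mul_sub, mul_sum, ← sum_sub_distrib]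
  exact sum_congr rfl fun n _ => by ring

lemma hasDerivAt_tmSum {x : ℝ} (hk : ∀ n, HasDerivAt (k n) (k' n x) x) (N : ℕ) :
    HasDerivAt (tmSum k N) (tmSum k' N x) x :=
  HasDerivAt.fun_sum fun n _ => (hk n).const_mul _

/-- `(-1, ∞)` is open and mapped into itself by `x ↦ x / 2` and `x ↦ (x + 1) / 2`, so the doubling
recursion can be differentiated there. -/
lemma tmSum_two_mul_of_hasDerivAt (hk : ∀ n x, -1 < x → HasDerivAt (k n) (k' n x) x) {c : ℝ}
    {N : ℕ}
    (h : ∀ x, -1 < x → tmSum k (2 * N) x = c * (tmSum k N (x / 2) - tmSum k N ((x + 1) / 2)))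
    {x : ℝ} (hx : -1 < x) :
    tmSum k' (2 * N) x = c / 2 * (tmSum k' N (x / 2) - tmSum k' N ((x + 1) / 2)) := by
  have hF := hasDerivAt_tmSum (fun n => hk n x hx) (2 * N)
  have h₁ : HasDerivAt (fun y => tmSum k N (y / 2)) (tmSum k' N (x / 2) * (1 / 2)) x :=
    (hasDerivAt_tmSum (fun n => hk n _ (by linarith)) N).comp x ((hasDerivAt_id x).div_const 2)
  have h₂ :
      HasDerivAt (fun y => tmSum k N ((y + 1) / 2)) (tmSum k' N ((x + 1) / 2) * (1 / 2)) x :=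
    (hasDerivAt_tmSum (fun n => hk n _ (by linarith)) N).comp x
      (((hasDerivAt_id x).add_const 1).div_const 2)
  have hG := ((h₁.sub h₂).const_mul c).congr_of_eventuallyEq
    (eventually_of_mem (Ioi_mem_nhds hx) h)
  rw [hF.unique hG]
  ring

lemma abs_tmSum_sub_le {s : Set ℝ} (hs : Convex ℝ s)
    (hk : ∀ n, ∀ x ∈ s, HasDerivAt (k n) (k' n x) x)
    {N : ℕ} {C : ℝ} (hC : ∀ x ∈ s, |tmSum k' N x| ≤ C) {y z : ℝ} (hy : y ∈ s) (hz : z ∈ s) :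
    |tmSum k N y - tmSum k N z| ≤ C * |y - z| :=
  hs.norm_image_sub_le_of_norm_hasDerivWithin_le
    (fun x hx => (hasDerivAt_tmSum (fun n => hk n x hx) N).hasDerivWithinAt) hC hz hy

end TmSum

/-- The `g` of the header: `log ((n + x) (n + (x + 1) / 2) / (n + x / 2))` for `n ≥ 1`. -/
noncomputable def logFactor (n : ℕ) (x : ℝ) : ℝ :=
  log (n + x) + log (2 * n + x + 1) - log (2 * n + x)

noncomputable def logFactor' (n : ℕ) (x : ℝ) : ℝ :=
  (n + x)⁻¹ + (2 * n + x + 1)⁻¹ - (2 * n + x)⁻¹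

noncomputable def logFactor'' (n : ℕ) (x : ℝ) : ℝ :=
  -((n + x) ^ 2)⁻¹ - ((2 * n + x + 1) ^ 2)⁻¹ + ((2 * n + x) ^ 2)⁻¹

lemma logFactor_zero (x : ℝ) : logFactor 0 x = log (x + 1) := by
  simp [logFactor]

lemma logFactor'_zero (x : ℝ) : logFactor' 0 x = (x + 1)⁻¹ := by
  simp [logFactor']

lemma logFactor''_zero (x : ℝ) : logFactor'' 0 x = -((x + 1) ^ 2)⁻¹ := by
  simp only [logFactor'', Nat.cast_zero, mul_zero, zero_add]
  ring

lemma log_div_two {y : ℝ} (hy : 0 < y) : log (y / 2) = log y - log 2 :=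
  log_div hy.ne' two_ne_zero

lemma logFactor_two_mul_sub (n : ℕ) {x : ℝ} (hx : -1 < x) :
    logFactor (2 * n) x - logFactor (2 * n + 1) x =
      logFactor n (x / 2) - logFactor n ((x + 1) / 2) := by
  rcases n.eq_zero_or_pos with rfl | hn
  · rw [logFactor_zero, logFactor_zero, logFactor_zero, logFactor,
      show x / 2 + 1 = (x + 2) / 2 by ring, show (x + 1) / 2 + 1 = (x + 3) / 2 by ring,
      log_div_two (by linarith), log_div_two (by linarith)]
    push_cast
    ring_nf
  · have : (1 : ℝ) ≤ n := by exact_mod_cast hn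
    simp only [logFactor]
    rw [show (n : ℝ) + x / 2 = (2 * n + x) / 2 by ring,
      show 2 * (n : ℝ) + x / 2 + 1 = (4 * n + x + 2) / 2 by ring,
      show 2 * (n : ℝ) + x / 2 = (4 * n + x) / 2 by ring,
      show (n : ℝ) + (x + 1) / 2 = (2 * n + x + 1) / 2 by ring,
      show 2 * (n : ℝ) + (x + 1) / 2 + 1 = (4 * n + x + 3) / 2 by ring,
      show 2 * (n : ℝ) + (x + 1) / 2 = (4 * n + x + 1) / 2 by ring]
    rw [log_div_two (by linarith), log_div_two (by linarith), log_div_two (by linarith),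
      log_div_two (by linarith), log_div_two (by linarith), log_div_two (by linarith)]
    push_cast
    ring_nf

lemma hasDerivAt_logFactor (n : ℕ) {x : ℝ} (hx : -1 < x) :
    HasDerivAt (logFactor n) (logFactor' n x) x := by
  rcases n.eq_zero_or_pos with rfl | hn
  · rw [show logFactor 0 = fun y => log (y + 1) from funext logFactor_zero, logFactor'_zero]
    simpa using ((hasDerivAt_id' x).add_const 1).log (by linarith : 0 < x + 1).ne'
  · have : (1 : ℝ) ≤ n := by exact_mod_cast hn
    have h₁ := ((hasDerivAt_id' x).const_add (n : ℝ)).log (by linarith : (0 : ℝ) < n + x).ne'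
    have h₂ := (((hasDerivAt_id' x).const_add (2 * n : ℝ)).add_const 1).log
      (by linarith : (0 : ℝ) < 2 * n + x + 1).ne'
    have h₃ := ((hasDerivAt_id' x).const_add (2 * n : ℝ)).log
      (by linarith : (0 : ℝ) < 2 * n + x).ne'
    exact ((h₁.fun_add h₂).fun_sub h₃).congr_deriv (by simp only [logFactor', one_div])

lemma hasDerivAt_logFactor' (n : ℕ) {x : ℝ} (hx : -1 < x) :
    HasDerivAt (logFactor' n) (logFactor'' n x) x := by
  rcases n.eq_zero_or_pos with rfl | hn
  · rw [show logFactor' 0 = fun y => (y + 1)⁻¹ from funext logFactor'_zero, logFactor''_zero]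
    exact (((hasDerivAt_id' x).add_const 1).fun_inv (by linarith : 0 < x + 1).ne').congr_deriv
      (by ring)
  · have : (1 : ℝ) ≤ n := by exact_mod_cast hn
    have h₁ := ((hasDerivAt_id' x).const_add (n : ℝ)).fun_inv (by linarith : (0 : ℝ) < n + x).ne'
    have h₂ := (((hasDerivAt_id' x).const_add (2 * n : ℝ)).add_const 1).fun_inv
      (by linarith : (0 : ℝ) < 2 * n + x + 1).ne'
    have h₃ := ((hasDerivAt_id' x).const_add (2 * n : ℝ)).fun_inv
      (by linarith : (0 : ℝ) < 2 * n + x).ne'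
    exact ((h₁.fun_add h₂).fun_sub h₃).congr_deriv (by rw [logFactor'']; ring)

lemma abs_logFactor'_le (n : ℕ) {x : ℝ} (hx : 0 < n + x) : |logFactor' n x| ≤ (n + x)⁻¹ := by
  have hn : (0 : ℝ) ≤ n := n.cast_nonneg
  have h₁ : (2 * n + x)⁻¹ ≤ (n + x)⁻¹ := inv_anti₀ hx (by linarith)
  have h₂ : (2 * n + x + 1)⁻¹ ≤ (2 * n + x)⁻¹ := inv_anti₀ (by linarith) (by linarith)
  have h₃ : 0 < (2 * n + x + 1)⁻¹ := inv_pos.2 (by linarith)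
  rw [abs_le, logFactor']
  constructor <;> linarith

lemma abs_logFactor''_le (n : ℕ) {x : ℝ} (hx : 0 < n + x) :
    |logFactor'' n x| ≤ ((n + x) ^ 2)⁻¹ := by
  have hn : (0 : ℝ) ≤ n := n.cast_nonneg
  have h₁ : ((2 * n + x) ^ 2)⁻¹ ≤ ((n + x) ^ 2)⁻¹ :=
    inv_anti₀ (by positivity) (pow_le_pow_left₀ hx.le (by linarith) 2)
  have h₂ : ((2 * n + x + 1) ^ 2)⁻¹ ≤ ((2 * n + x) ^ 2)⁻¹ :=
    inv_anti₀ (by nlinarith) (pow_le_pow_left₀ (by linarith) (by linarith) 2)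
  have h₃ : 0 < ((2 * n + x + 1) ^ 2)⁻¹ := inv_pos.2 (pow_pos (by linarith) 2)
  rw [abs_le, logFactor'']
  constructor <;> linarith

lemma tmSum_logFactor_two_mul (N : ℕ) {x : ℝ} (hx : -1 < x) :
    tmSum logFactor (2 * N) x = tmSum logFactor N (x / 2) - tmSum logFactor N ((x + 1) / 2) := by
  simpa using tmSum_two_mul (c := 1) (fun n => by rw [one_mul]; exact logFactor_two_mul_sub n hx) N

lemma tmSum_logFactor'_two_mul (N : ℕ) {x : ℝ} (hx : -1 < x) :
    tmSum logFactor' (2 * N) x =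
      1 / 2 * (tmSum logFactor' N (x / 2) - tmSum logFactor' N ((x + 1) / 2)) :=
  tmSum_two_mul_of_hasDerivAt (fun n _ hy => hasDerivAt_logFactor n hy)
    (fun y hy => by rw [one_mul]; exact tmSum_logFactor_two_mul N hy) hx

lemma tmSum_logFactor''_two_mul (N : ℕ) {x : ℝ} (hx : -1 < x) :
    tmSum logFactor'' (2 * N) x =
      1 / 4 * (tmSum logFactor'' N (x / 2) - tmSum logFactor'' N ((x + 1) / 2)) := by
  rw [tmSum_two_mul_of_hasDerivAt (fun n _ hy => hasDerivAt_logFactor' n hy)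
    (fun y hy => tmSum_logFactor'_two_mul N hy) hx]
  norm_num

section Bounds

variable {δ : ℝ}

lemma abs_tmSum_logFactor''_two_mul_le (hδ : 0 < δ) (hδ1 : δ ≤ 1) {m : ℕ} {C : ℝ}
    (hC : ∀ y, δ - 1 ≤ y → |tmSum logFactor'' m y| ≤ C) {x : ℝ} (hx : δ - 1 ≤ x) :
    |tmSum logFactor'' (2 * m) x| ≤ C / 2 := by
  rw [tmSum_logFactor''_two_mul m (by linarith), abs_mul, abs_of_pos (by norm_num)]
  linarith [abs_sub (tmSum logFactor'' m (x / 2)) (tmSum logFactor'' m ((x + 1) / 2)),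
    hC (x / 2) (by linarith), hC ((x + 1) / 2) (by linarith)]

-- The constant `3` is what the odd step needs; `1 / δ ^ 2` bounds the term `N = 1`.
lemma abs_tmSum_logFactor''_le (hδ : 0 < δ) (hδ1 : δ ≤ 1) (N : ℕ) {x : ℝ} (hx : δ - 1 ≤ x) :
    |tmSum logFactor'' N x| ≤ 3 / δ ^ 2 / N := by
  set A := 3 / δ ^ 2
  have hA : 3 ≤ A := by rw [le_div_iff₀ (by positivity)]; nlinarith
  induction N using Nat.strong_induction_on generalizing x with
  | _ N ih =>
  obtain ⟨m, rfl | rfl⟩ := N.even_or_odd'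
  · rcases m.eq_zero_or_pos with rfl | hm
    · simp [tmSum]
    have h := abs_tmSum_logFactor''_two_mul_le hδ hδ1 (fun y hy => ih m (by omega) hy) hx
    push_cast
    rwa [div_div, mul_comm (m : ℝ)] at h
  rcases m.eq_zero_or_pos with rfl | hm
  · have hx1 : δ ≤ x + 1 := by linarith
    rw [tmSum_one, logFactor''_zero, abs_neg, abs_of_pos (inv_pos.2 (pow_pos (by linarith) 2)),
      Nat.cast_one, div_one]
    calc ((x + 1) ^ 2)⁻¹ ≤ (δ ^ 2)⁻¹ := inv_anti₀ (by positivity) (pow_le_pow_left₀ hδ.le hx1 2)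
      _ ≤ A := by
        rw [inv_eq_one_div]; exact div_le_div_of_nonneg_right (by norm_num) (by positivity)
  have hm1 : (1 : ℝ) ≤ m := by exact_mod_cast hm
  have hnext :=
    abs_tmSum_logFactor''_two_mul_le hδ hδ1 (fun y hy => ih (m + 1) (by omega) hy) hx
  have hterm : |logFactor'' (2 * m + 1) x| ≤ ((2 * m : ℝ) ^ 2)⁻¹ := by
    refine (abs_logFactor''_le _ (by push_cast; linarith)).trans
      (inv_anti₀ (by positivity) (pow_le_pow_left₀ (by positivity) ?_ 2))
    push_cast; linarith
  calc |tmSum logFactor'' (2 * m + 1) x|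
      ≤ |tmSum logFactor'' (2 * (m + 1)) x| + |logFactor'' (2 * m + 1) x| :=
        abs_tmSum_le_succ _ _
    _ ≤ A / (m + 1) / 2 + ((2 * m : ℝ) ^ 2)⁻¹ := by
      push_cast at hnext
      exact add_le_add hnext hterm
    _ ≤ A / (2 * m + 1) := by
      rw [div_div, inv_eq_one_div, div_add_div _ _ (by positivity) (by positivity),
        div_le_div_iff₀ (by positivity) (by positivity)]
      nlinarith [mul_le_mul_of_nonneg_left hA (by positivity : (0 : ℝ) ≤ m ^ 2 * (2 * m + 1))]
    _ = A / ((2 * m + 1 : ℕ) : ℝ) := by push_cast; rfl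

lemma abs_tmSum_logFactor'_two_mul_le (hδ : 0 < δ) (hδ1 : δ ≤ 1) {m : ℕ} {C : ℝ}
    (hC : ∀ y, δ - 1 ≤ y → |tmSum logFactor'' m y| ≤ C) {x : ℝ} (hx : δ - 1 ≤ x) :
    |tmSum logFactor' (2 * m) x| ≤ C / 4 := by
  have h := abs_tmSum_sub_le (convex_Ici (δ - 1))
    (fun n y (hy : δ - 1 ≤ y) => hasDerivAt_logFactor' n (by linarith)) hC
    (show δ - 1 ≤ (x + 1) / 2 by linarith) (show δ - 1 ≤ x / 2 by linarith)
  rw [show (x + 1) / 2 - x / 2 = 1 / 2 by ring, abs_of_pos (by norm_num : (0 : ℝ) < 1 / 2)] at h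
  rw [tmSum_logFactor'_two_mul m (by linarith), abs_mul, abs_of_pos one_half_pos, abs_sub_comm]
  linarith

lemma abs_tmSum_logFactor'_le (hδ : 0 < δ) (hδ1 : δ ≤ 1) (N : ℕ) {x : ℝ} (hx : δ - 1 ≤ x) :
    |tmSum logFactor' N x| ≤ (3 / δ ^ 2 + 2) / N := by
  set A := 3 / δ ^ 2
  have hA : 0 ≤ A := by positivity
  have hTwoMul : ∀ m : ℕ, ∀ y, δ - 1 ≤ y → |tmSum logFactor' (2 * m) y| ≤ A / m / 4 :=
    fun m y hy => abs_tmSum_logFactor'_two_mul_le hδ hδ1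
      (fun z hz => abs_tmSum_logFactor''_le hδ hδ1 m hz) hy
  obtain ⟨m, rfl | rfl⟩ := N.even_or_odd'
  · calc |tmSum logFactor' (2 * m) x| ≤ A / m / 4 := hTwoMul m x hx
      _ = A / 2 / ((2 * m : ℕ) : ℝ) := by push_cast; ring
      _ ≤ (A + 2) / ((2 * m : ℕ) : ℝ) := div_le_div_of_nonneg_right (by linarith) (by positivity)
  rcases m.eq_zero_or_pos with rfl | hm
  · have hδinv : 1 ≤ δ⁻¹ := (one_le_inv₀ hδ).2 hδ1
    have hA' : A = 3 * δ⁻¹ ^ 2 := by simp only [A, inv_pow, div_eq_mul_inv]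
    rw [tmSum_one, logFactor'_zero, abs_of_pos (inv_pos.2 (by linarith)), Nat.cast_one, div_one]
    calc (x + 1)⁻¹ ≤ δ⁻¹ := inv_anti₀ hδ (by linarith)
      _ ≤ A + 2 := by nlinarith
  have hm1 : (1 : ℝ) ≤ m := by exact_mod_cast hm
  have hterm : |logFactor' (2 * m + 1) x| ≤ (2 * m : ℝ)⁻¹ := by
    refine (abs_logFactor'_le _ (by push_cast; linarith)).trans (inv_anti₀ (by positivity) ?_)
    push_cast; linarith
  calc |tmSum logFactor' (2 * m + 1) x|
      ≤ |tmSum logFactor' (2 * (m + 1)) x| + |logFactor' (2 * m + 1) x| :=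
        abs_tmSum_le_succ _ _
    _ ≤ A / (m + 1) / 4 + (2 * m : ℝ)⁻¹ := by
      have h := hTwoMul (m + 1) x hx
      push_cast at h
      exact add_le_add h hterm
    _ ≤ (A + 2) / (2 * m + 1) := by
      rw [div_div, inv_eq_one_div, div_add_div _ _ (by positivity) (by positivity),
        div_le_div_iff₀ (by positivity) (by positivity)]
      nlinarith [mul_nonneg hA (by positivity : (0 : ℝ) ≤ m ^ 2)]
    _ = (A + 2) / ((2 * m + 1 : ℕ) : ℝ) := by push_cast; rfl

lemma tendsto_tmSum_logFactor_sub (hδ : 0 < δ) (hδ1 : δ ≤ 1) {y z : ℝ} (hy : δ - 1 ≤ y)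
    (hz : δ - 1 ≤ z) :
    Tendsto (fun N => tmSum logFactor N y - tmSum logFactor N z) atTop (𝓝 0) := by
  refine squeeze_zero_norm (fun N => ?_)
    (tendsto_const_div_atTop_nhds_zero_nat ((3 / δ ^ 2 + 2) * |y - z|))
  rw [Real.norm_eq_abs, mul_div_right_comm]
  exact abs_tmSum_sub_le (convex_Ici (δ - 1))
    (fun n x (hx : δ - 1 ≤ x) => hasDerivAt_logFactor n (by linarith))
    (fun x hx => abs_tmSum_logFactor'_le hδ hδ1 N hx) hy hz

end Bounds

lemma factor_eq_exp_logFactor_sub {n : ℕ} (hn : 1 ≤ n) {b c : ℝ} (hb : -1 < b) (hc : -1 < c) :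
    ((n + b) * (n + (b + 1) / 2) * (n + c / 2)) / ((n + c) * (n + (c + 1) / 2) * (n + b / 2)) =
      exp (logFactor n b - logFactor n c) := by
  have : (1 : ℝ) ≤ n := by exact_mod_cast hn
  have hb₁ : (0 : ℝ) < n + b := by linarith
  have hb₂ : (0 : ℝ) < 2 * n + b := by linarith
  have hc₁ : (0 : ℝ) < n + c := by linarith
  have hc₂ : (0 : ℝ) < 2 * n + c := by linarith
  simp only [logFactor, exp_sub, exp_add]
  rw [exp_log hb₁, exp_log hb₂, exp_log (by linarith), exp_log hc₁, exp_log hc₂,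
    exp_log (by linarith)]
  field_simp
  ring

lemma prod_factor_zpow_u {b c : ℝ} (hb : -1 < b) (hc : -1 < c) (N : ℕ) :
    ∏ n ∈ Icc 1 N, ((((n : ℝ) + b) * ((n : ℝ) + (b + 1) / 2) * ((n : ℝ) + c / 2)) /
        (((n : ℝ) + c) * ((n : ℝ) + (c + 1) / 2) * ((n : ℝ) + b / 2))) ^ (u n) =
      exp (tmSum logFactor (N + 1) b - tmSum logFactor (N + 1) c) * ((c + 1) / (b + 1)) := by
  induction N with
  | zero =>
    have hb₁ : b + 1 ≠ 0 := by linarith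
    have hc₁ : c + 1 ≠ 0 := by linarith
    rw [Icc_eq_empty (by omega), prod_empty, tmSum_one, tmSum_one, logFactor_zero, logFactor_zero,
      exp_sub, exp_log (by linarith), exp_log (by linarith)]
    field_simp
  | succ N ih =>
    rw [prod_Icc_succ_top (by omega), ih, factor_eq_exp_logFactor_sub (by omega) hb hc,
      ← rpow_intCast, ← exp_mul, tmSum_succ (N + 1) b, tmSum_succ (N + 1) c, mul_right_comm,
      ← exp_add]
    congr 2
    ring

/-- For `b, c > -1`, the partial products
`∏_{n=1}^{N} [((n+b)(n+(b+1)/2)(n+c/2)) / ((n+c)(n+(c+1)/2)(n+b/2))]^{u_n}`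
converge to `(c+1)/(b+1)`. -/
theorem stmt_14 (b c : ℝ) (hb : -1 < b) (hc : -1 < c) :
    Tendsto (fun N : ℕ => ∏ n ∈ Finset.Icc 1 N,
      ((((n : ℝ) + b) * ((n : ℝ) + (b + 1) / 2) * ((n : ℝ) + c / 2)) /
        (((n : ℝ) + c) * ((n : ℝ) + (c + 1) / 2) * ((n : ℝ) + b / 2))) ^ (u n))
      atTop (𝓝 ((c + 1) / (b + 1))) := by
  set δ := min (min (b + 1) (c + 1)) 1
  have hδ : 0 < δ := lt_min (lt_min (by linarith) (by linarith)) one_pos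
  have hδ1 : δ ≤ 1 := min_le_right _ _
  have hbδ : δ - 1 ≤ b := by linarith [(min_le_left _ 1).trans (min_le_left (b + 1) (c + 1))]
  have hcδ : δ - 1 ≤ c := by linarith [(min_le_left _ 1).trans (min_le_right (b + 1) (c + 1))]
  have hlim := (((continuous_exp.tendsto 0).comp
    ((tendsto_add_atTop_iff_nat 1).2 (tendsto_tmSum_logFactor_sub hδ hδ1 hbδ hcδ))).mul_const
    ((c + 1) / (b + 1)))
  rw [exp_zero, one_mul] at hlim
  simpa only [prod_factor_zpow_u hb hc, Function.comp_def] using hlim
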